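/- arXiv:1712.07640 — 3 statements merged into one kernel-verified Lean document; each statement's English description precedes it below -/
import Mathlib

section
/- Let 0 < r < 1, 0 < θr < 1, F > 0, and let H, α, β, τ, Γ be real. Then the derivative f'(1) of the replicator right-hand side f at the all-selective equilibrium x = 1 is negative (i.e., a population of selective poachers is evolutionarily stable) if and only if τ > (1/(1 − r^(N_r − 1))) · (F + H·θr·(1−r)^(1−α−β) − Γ·(1−r)^(1−β)/r)/F. -/
/-! At `x = 1` the factor `x (1 - x)` vanishes and has slope `-1`, so `f'(1) = u₂(1) - u₁(1)`,
and there `θ = 1 - r`, so every rpow is a power of `1 - r`. The gap `u₂(1) - u₁(1)` is affine in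
`τ` with slope `-(r - r^{N_r}) F (1-r)^{β-1} = -r (1 - r^{N_r - 1}) F (1-r)^{β-1}`, which is
negative because `N_r ≥ 2`; solving for `τ` gives the threshold. -/

open Real

theorem deriv_mul_one_sub_mul_at_one {g : ℝ → ℝ} (hg : DifferentiableAt ℝ g 1) :
    deriv (fun x => x * (1 - x) * g x) 1 = -g 1 := by
  have hq : HasDerivAt (fun x : ℝ => x * (1 - x)) (1 * (1 - 1) + 1 * (0 - 1)) 1 :=
    (hasDerivAt_id 1).mul ((hasDerivAt_const 1 (1 : ℝ)).sub (hasDerivAt_id 1))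
  exact (hq.mul hg.hasDerivAt).deriv.trans (by ring)

theorem two_le_ceil_one_div {θ : ℝ} (h0 : 0 < θ) (h1 : θ < 1) : 2 ≤ ⌈1 / θ⌉₊ := by
  have : ((1 : ℕ) : ℝ) < 1 / θ := by exact_mod_cast (one_lt_div h0).2 h1
  have := Nat.lt_ceil.2 this
  omega

theorem rpow_one_sub_sub_eq {a : ℝ} (ha : 0 < a) (α β : ℝ) :
    a ^ (1 - α - β) = a ^ (-α) * (a ^ (β - 1))⁻¹ := by
  rw [← rpow_neg ha.le, ← rpow_add ha]
  ring_nf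

theorem rpow_one_sub_eq_inv {a : ℝ} (ha : 0 < a) (β : ℝ) : a ^ (1 - β) = (a ^ (β - 1))⁻¹ := by
  rw [← rpow_neg ha.le]
  ring_nf

theorem payoff_gap_at_one_neg_iff {r θr F H α β τ Γ : ℝ} {N : ℕ}
    (hr0 : 0 < r) (hr1 : r < 1) (hF : 0 < F) (hN : 2 ≤ N) :
    -((1 - r) * H * (1 - r) ^ (-α) - (r + τ * (1 - r)) * F * (1 - r) ^ (β - 1) -
        ((1 - r + r * θr) * H * (1 - r) ^ (-α) - τ * (1 - r ^ N) * F * (1 - r) ^ (β - 1) - Γ))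
        < 0 ↔
      τ > 1 / (1 - r ^ (N - 1)) *
        ((F + H * θr * (1 - r) ^ (1 - α - β) - Γ * (1 - r) ^ (1 - β) / r) / F) := by
  have hA : 0 < 1 - r := by linarith
  rw [rpow_one_sub_sub_eq hA, rpow_one_sub_eq_inv hA]
  set P := (1 - r) ^ (-α)
  set Q := (1 - r) ^ (β - 1)
  set M := 1 - r ^ (N - 1)
  have hQ : 0 < Q := rpow_pos_of_pos hA _
  have hM : 0 < M := sub_pos.2 (pow_lt_one₀ hr0.le hr1 (by omega))
  have hrN : r ^ N = r * r ^ (N - 1) := by rw [← pow_succ']; congr 1; omega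
  have hgap : -((1 - r) * H * P - (r + τ * (1 - r)) * F * Q -
        ((1 - r + r * θr) * H * P - τ * (1 - r ^ N) * F * Q - Γ))
      = (r * θr * H * P + r * F * Q - Γ) - τ * (r * F * Q * M) := by
    rw [hrN]; ring
  have hthreshold : 1 / M * ((F + H * θr * (P * Q⁻¹) - Γ * Q⁻¹ / r) / F)
      = (r * θr * H * P + r * F * Q - Γ) / (r * F * Q * M) := by
    field_simp
    ring
  rw [hgap, hthreshold, gt_iff_lt, div_lt_iff₀ (by positivity), sub_neg]

/-- A population of selective poachers is evolutionarily stable (the derivative of the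
replicator right-hand side at the all-selective equilibrium `x = 1` is negative) if and
only if the time-to-kill `τ` exceeds the stated threshold. -/
theorem selective_stability_iff
    (r θr F H α β τ Γ : ℝ)
    (hr0 : 0 < r) (hr1 : r < 1) (hθr0 : 0 < θr) (hθr1 : θr < 1) (hF : 0 < F) :
    let Nr : ℕ := ⌈1 / θr⌉₊
    let θ : ℝ → ℝ := fun x => x * (1 - r) + (1 - x) * (1 - r + r * θr)
    let u1 : ℝ → ℝ := fun x =>
      (1 - r) * H * θ x ^ (-α) - (r + τ * (1 - r)) * F * (1 - r) ^ (β - 1)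
    let u2 : ℝ → ℝ := fun x =>
      (1 - r + r * θr) * H * θ x ^ (-α) - τ * (1 - r ^ Nr) * F * (1 - r) ^ (β - 1) - Γ
    let f : ℝ → ℝ := fun x => x * (1 - x) * (u1 x - u2 x)
    deriv f 1 < 0 ↔
      τ > 1 / (1 - r ^ (Nr - 1)) *
        ((F + H * θr * (1 - r) ^ (1 - α - β) - Γ * (1 - r) ^ (1 - β) / r) / F) := by
  intro Nr θ u1 u2 f
  have hθ1 : θ 1 = 1 - r := by simp only [θ]; ring
  have hθpow : DifferentiableAt ℝ (fun x => θ x ^ (-α)) 1 :=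
    DifferentiableAt.rpow_const (by fun_prop) (Or.inl (by rw [hθ1]; linarith))
  have hgap : DifferentiableAt ℝ (fun x => u1 x - u2 x) 1 := by
    simp only [u1, u2]
    fun_prop
  have hderiv : deriv f 1 = -(u1 1 - u2 1) := deriv_mul_one_sub_mul_at_one hgap
  rw [hderiv]
  simp only [u1, u2, hθ1]
  exact payoff_gap_at_one_neg_iff hr0 hr1 hF (two_le_ceil_one_div hθr0 hθr1)
end

section
/- Let 0 < r < 1, 0 < θr < 1, and let H, α, F, β, τ, Γ be real. Then the function f(x) := x(1−x)(u1(x)−u2(x)) has derivative at x = 1 equal to J(1) = H·r·θr·(1−r)^(−α) + F·(1−r)^(β−1)·(r − τ·(r − r^(N_r))) − Γ. -/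
/-! At `x = 1` the factor `x (1 - x)` vanishes with derivative `-1`, so the derivative of
`f = x (1 - x) (u1 - u2)` there is just `-(u1 1 - u2 1)`; only continuity of `u1 - u2` at `1` is
needed, and it holds because `θ 1 = 1 - r ≠ 0`. -/

theorem HasDerivAt.mul_continuousAt_of_eq_zero {𝕜 : Type*} [NontriviallyNormedField 𝕜]
    {p g : 𝕜 → 𝕜} {p' a : 𝕜} (hp : HasDerivAt p p' a) (hpa : p a = 0)
    (hg : ContinuousAt g a) : HasDerivAt (fun x => p x * g x) (p' * g a) a := by
  rw [hasDerivAt_iff_tendsto_slope] at hp ⊢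
  have hslope : slope (fun x => p x * g x) a = fun x => slope p a x * g x := by
    ext x
    simp only [slope_def_field, hpa, zero_mul, sub_zero]
    ring
  rw [hslope]
  exact hp.mul (hg.tendsto.mono_left nhdsWithin_le_nhds)

theorem hasDerivAt_mul_one_sub_at_one : HasDerivAt (fun x : ℝ => x * (1 - x)) (-1) 1 := by
  simpa using (hasDerivAt_id' (1 : ℝ)).fun_mul ((hasDerivAt_id' (1 : ℝ)).const_sub 1)

theorem deriv_at_one_general
    (r θr H α F β τ Γ : ℝ)
    (hr1 : r < 1) :
    let Nr : ℕ := ⌈1 / θr⌉₊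
    let θ : ℝ → ℝ := fun x => x * (1 - r) + (1 - x) * (1 - r + r * θr)
    let u1 : ℝ → ℝ := fun x =>
      (1 - r) * H * θ x ^ (-α) - (r + τ * (1 - r)) * F * (1 - r) ^ (β - 1)
    let u2 : ℝ → ℝ := fun x =>
      (1 - r + r * θr) * H * θ x ^ (-α) - τ * (1 - r ^ Nr) * F * (1 - r) ^ (β - 1) - Γ
    let f : ℝ → ℝ := fun x => x * (1 - x) * (u1 x - u2 x)
    HasDerivAt f
      (H * r * θr * (1 - r) ^ (-α) + F * (1 - r) ^ (β - 1) * (r - τ * (r - r ^ Nr)) - Γ)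
      1 := by
  intro Nr θ u1 u2 f
  have hθ_one : θ 1 = 1 - r := by simp [θ]
  have hθ_pow : ContinuousAt (fun x => θ x ^ (-α)) 1 :=
    ContinuousAt.rpow_const (by fun_prop) (Or.inl (by rw [hθ_one]; linarith))
  have hu : ContinuousAt (fun x => u1 x - u2 x) 1 := by fun_prop
  have hf := hasDerivAt_mul_one_sub_at_one.mul_continuousAt_of_eq_zero (by norm_num) hu
  refine hf.congr_deriv ?_
  simp only [u1, u2, hθ_one]
  ring

/-- The replicator right-hand side `f(x) = x(1-x)(u1(x) - u2(x))` has derivative at the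
all-selective equilibrium `x = 1` equal to
`J(1) = H r θr (1-r)^(-α) + F (1-r)^(β-1) (r - τ (r - r^{N_r})) - Γ`. -/
theorem deriv_at_one
    (r θr H α F β τ Γ : ℝ)
    (hr0 : 0 < r) (hr1 : r < 1) (hθr0 : 0 < θr) (hθr1 : θr < 1) :
    let Nr : ℕ := ⌈1 / θr⌉₊
    let θ : ℝ → ℝ := fun x => x * (1 - r) + (1 - x) * (1 - r + r * θr)
    let u1 : ℝ → ℝ := fun x =>
      (1 - r) * H * θ x ^ (-α) - (r + τ * (1 - r)) * F * (1 - r) ^ (β - 1)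
    let u2 : ℝ → ℝ := fun x =>
      (1 - r + r * θr) * H * θ x ^ (-α) - τ * (1 - r ^ Nr) * F * (1 - r) ^ (β - 1) - Γ
    let f : ℝ → ℝ := fun x => x * (1 - x) * (u1 x - u2 x)
    HasDerivAt f
      (H * r * θr * (1 - r) ^ (-α) + F * (1 - r) ^ (β - 1) * (r - τ * (r - r ^ Nr)) - Γ)
      1 :=
  deriv_at_one_general r θr H α F β τ Γ hr1
end

section
/- Let 0 < θr < 1, F > 0, H ≥ 0, and let α, β be real, and set Γ = 0. Then the right-hand side of the selective-stability threshold, R(r) := (1/(1 − r^(N_r − 1))) · (F + H·θr·(1−r)^(1−α−β))/F, tends to +∞ as r → 1 from the left (i.e., along the filter of reals less than 1 tending to 1). Consequently, devaluing all rhinos (r → 1) makes the selective-stability condition τ > R(r) impossible to satisfy for any fixed τ. -/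
/-!
Since `N_r ≥ 2`, the factor `1 / (1 - r ^ (N_r - 1))` tends to `+∞` as `r → 1⁻`, while for `r < 1`
the second factor is at least `1`: its `rpow` term has the nonnegative base `1 - r`, so it is
nonnegative whatever the sign of the exponent `1 - α - β`.
-/

open Filter Topology

theorem Filter.Tendsto.atTop_mul_of_eventually_one_le {α R : Type*} [Semiring R] [PartialOrder R]
    [IsOrderedRing R] {l : Filter α} {f g : α → R}
    (hf : Tendsto f l atTop) (hg : ∀ᶠ x in l, 1 ≤ g x) :
    Tendsto (fun x => f x * g x) l atTop := by
  refine tendsto_atTop_mono' l ?_ hf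
  filter_upwards [hf.eventually_ge_atTop 0, hg] with x hfx hgx
  exact le_mul_of_one_le_right hfx hgx

theorem tendsto_one_div_one_sub_pow_nhdsLT_one {n : ℕ} (hn : n ≠ 0) :
    Tendsto (fun r : ℝ => 1 / (1 - r ^ n)) (𝓝[<] 1) atTop := by
  simp only [one_div]
  refine Tendsto.inv_tendsto_nhdsGT_zero (tendsto_nhdsWithin_of_tendsto_nhds_of_eventually_within
    _ ?_ ?_)
  · have hcont : Tendsto (fun r : ℝ => 1 - r ^ n) (𝓝 1) (𝓝 (1 - 1 ^ n)) :=
      tendsto_const_nhds.sub ((continuous_pow n).tendsto 1)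
    simpa using hcont.mono_left nhdsWithin_le_nhds
  · filter_upwards [Ioo_mem_nhdsLT zero_lt_one] with r hr
    exact sub_pos.mpr (pow_lt_one₀ hr.1.le hr.2 hn)

theorem one_lt_natCeil_one_div {θ : ℝ} (h0 : 0 < θ) (h1 : θ < 1) : 1 < ⌈1 / θ⌉₊ :=
  Nat.lt_ceil.mpr (by exact_mod_cast one_lt_one_div h0 h1)

theorem one_le_add_mul_rpow_div {F c x s : ℝ} (hF : 0 < F) (hc : 0 ≤ c) (hx : 0 ≤ x) :
    1 ≤ (F + c * x ^ s) / F := by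
  rw [le_div_iff₀ hF, one_mul, le_add_iff_nonneg_right]
  exact mul_nonneg hc (Real.rpow_nonneg hx s)

/-- With `Γ = 0`, the selective-stability threshold
`R(r) = (1/(1 - r^(N_r - 1))) (F + H θr (1-r)^(1-α-β))/F` tends to `+∞` as `r → 1⁻`.
Hence devaluing all rhinos makes the condition `τ > R(r)` impossible for any fixed `τ`. -/
theorem threshold_tendsto_atTop
    (θr F H α β : ℝ) (hθr0 : 0 < θr) (hθr1 : θr < 1) (hF : 0 < F) (hH : 0 ≤ H) :
    let Nr : ℕ := ⌈1 / θr⌉₊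
    Filter.Tendsto
      (fun r : ℝ => 1 / (1 - r ^ (Nr - 1)) * ((F + H * θr * (1 - r) ^ (1 - α - β)) / F))
      (nhdsWithin 1 (Set.Iio 1)) Filter.atTop := by
  intro Nr
  have hNr : Nr - 1 ≠ 0 := by
    have := one_lt_natCeil_one_div hθr0 hθr1
    omega
  refine (tendsto_one_div_one_sub_pow_nhdsLT_one hNr).atTop_mul_of_eventually_one_le ?_
  filter_upwards [self_mem_nhdsWithin] with r (hr : r < 1)
  exact one_le_add_mul_rpow_div hF (mul_nonneg hH hθr0.le) (sub_nonneg.mpr hr.le)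
end
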